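/- Let Ω be the closed region in the first quadrant bounded by the coordinate axes and the graph of G, where G(x) = R·g(x/R) - r·g(x/r) for 0 ≤ x ≤ r and G(x) = R·g(x/R) for r ≤ x ≤ R, with g(t) = (√(1-t²) - t·arccos(t))/π and 0 < r < R. Then the area of Ω equals (R² - r²)/8. -/

import Mathlib

noncomputable def g (t : ℝ) : ℝ := (Real.sqrt (1 - t^2) - t * Real.arccos t) / Real.pi

noncomputable def G (r R x : ℝ) : ℝ :=
  if x ≤ r then R * g (x / R) - r * g (x / r) else R * g (x / R)

/-!
`Real.sqrt` and `Real.arccos` both vanish on `[1, ∞)`, hence so does `g`, and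
`G r R x = R g(x/R) - r g(x/r)` for every `x`. By scaling, each term integrates over `[0, R]` to
`a² ∫₀¹ g = a²/8`, the last integral being computed from an explicit antiderivative. The area is
this integral because `G ≥ 0`, which is the monotonicity of `a ↦ a g(x/a)`: its derivative is
`√(1 - (x/a)²)/π`.
-/

open Real MeasureTheory Set

section RegionBetween

variable {α : Type*} [MeasurableSpace α] {μ : Measure α} {u v : α → ℝ} {s : Set α}

theorem prod_volume_region_between_cc_eq_lintegral (hu : Measurable u) (hv : Measurable v)
    (hs : MeasurableSet s) :
    μ.prod volume {p : α × ℝ | p.1 ∈ s ∧ p.2 ∈ Icc (u p.1) (v p.1)} =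
      ∫⁻ x in s, ENNReal.ofReal (v x - u x) ∂μ := by
  rw [Measure.prod_apply (measurableSet_region_between_cc hu hv hs), ← lintegral_indicator hs]
  refine lintegral_congr fun x => ?_
  by_cases hx : x ∈ s
  · simp only [hx, indicator_of_mem]
    convert Real.volume_Icc (a := u x) (b := v x) using 2
    ext y
    simp [hx]
  · simp [hx]

theorem prod_volume_region_between_cc_eq_integral (hu : Measurable u) (hv : Measurable v)
    (hs : MeasurableSet s) (hui : IntegrableOn u s μ) (hvi : IntegrableOn v s μ)
    (huv : ∀ x ∈ s, u x ≤ v x) :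
    μ.prod volume {p : α × ℝ | p.1 ∈ s ∧ p.2 ∈ Icc (u p.1) (v p.1)} =
      ENNReal.ofReal (∫ x in s, v x - u x ∂μ) := by
  rw [prod_volume_region_between_cc_eq_lintegral hu hv hs,
    ofReal_integral_eq_lintegral_ofReal (f := fun x => v x - u x) (hvi.sub hui)]
  exact (ae_restrict_iff' hs).2 (ae_of_all _ fun x hx => sub_nonneg.2 (huv x hx))

end RegionBetween

theorem g_eq_zero_of_one_le {t : ℝ} (ht : 1 ≤ t) : g t = 0 := by
  simp [g, arccos_eq_zero.2 ht, sqrt_eq_zero_of_nonpos (by nlinarith : 1 - t ^ 2 ≤ 0)]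

@[fun_prop]
theorem continuous_g : Continuous g := by
  unfold g
  fun_prop

theorem hasDerivAt_g {t : ℝ} (h₁ : t ≠ -1) (h₂ : t ≠ 1) :
    HasDerivAt g (-arccos t / π) t := by
  have hsq : 1 - t ^ 2 ≠ 0 := by
    rw [show 1 - t ^ 2 = (1 - t) * (1 + t) by ring]
    exact mul_ne_zero (sub_ne_zero.2 h₂.symm) fun h => h₁ (by linarith)
  exact (((((hasDerivAt_pow 2 t).const_sub 1).sqrt hsq).sub
    ((hasDerivAt_id' t).mul (hasDerivAt_arccos h₁ h₂))).div_const π).congr_deriv (by ring)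

theorem antitoneOn_g : AntitoneOn g (Icc (-1) 1) := by
  refine antitoneOn_of_deriv_nonpos (convex_Icc _ _) continuous_g.continuousOn
    (fun t ht => ?_) fun t ht => ?_ <;> rw [interior_Icc] at ht
  · exact (hasDerivAt_g ht.1.ne' ht.2.ne).differentiableAt.differentiableWithinAt
  · rw [(hasDerivAt_g ht.1.ne' ht.2.ne).deriv, neg_div]
    exact neg_nonpos.2 (div_nonneg (arccos_nonneg t) pi_pos.le)

theorem g_nonneg {t : ℝ} (ht : -1 ≤ t) : 0 ≤ g t := by
  rcases le_total t 1 with h | h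
  · simpa [g_eq_zero_of_one_le le_rfl] using
      antitoneOn_g ⟨ht, h⟩ ⟨by norm_num, le_rfl⟩ h
  · exact (g_eq_zero_of_one_le h).ge

theorem hasDerivAt_mul_g_div {x a : ℝ} (ha : a ≠ 0) (h₁ : x / a ≠ -1) (h₂ : x / a ≠ 1) :
    HasDerivAt (fun a => a * g (x / a)) (√(1 - (x / a) ^ 2) / π) a := by
  have hdiv : HasDerivAt (fun a => x / a) (-(x / a ^ 2)) a := by
    simpa [div_eq_mul_inv] using (hasDerivAt_inv ha).const_mul x
  refine ((hasDerivAt_id' a).mul ((hasDerivAt_g h₁ h₂).comp a hdiv)).congr_deriv ?_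
  simp only [Function.comp_apply, g]
  field_simp
  ring

theorem mul_g_div_le_mul_g_div {x a b : ℝ} (hx : 0 ≤ x) (ha : 0 < a) (hab : a ≤ b) :
    a * g (x / a) ≤ b * g (x / b) := by
  have hb : 0 < b := ha.trans_le hab
  rcases le_or_gt x a with hxa | hax
  · have hderiv : ∀ c ∈ Ioo a b,
        HasDerivAt (fun a => a * g (x / a)) (√(1 - (x / c) ^ 2) / π) c := by
      intro c hc
      have hc0 : 0 < c := ha.trans hc.1
      have hxc : x / c < 1 := (div_lt_one hc0).2 (hxa.trans_lt hc.1)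
      exact hasDerivAt_mul_g_div hc0.ne' (by linarith [div_nonneg hx hc0.le]) hxc.ne
    refine monotoneOn_of_deriv_nonneg (f := fun a => a * g (x / a)) (convex_Icc a b) ?_
      (fun c hc => ?_) (fun c hc => ?_) ⟨le_rfl, hab⟩ ⟨hab, le_rfl⟩ hab
    · exact continuousOn_id.mul (continuous_g.comp_continuousOn
        (continuousOn_const.div continuousOn_id fun c hc => (ha.trans_le hc.1).ne'))
    · rw [interior_Icc] at hc
      exact (hderiv c hc).differentiableAt.differentiableWithinAt
    · rw [interior_Icc] at hc
      rw [(hderiv c hc).deriv]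
      positivity
  · rw [g_eq_zero_of_one_le ((one_le_div ha).2 hax.le), mul_zero]
    exact mul_nonneg hb.le (g_nonneg (by linarith [div_nonneg hx hb.le]))

noncomputable def gAntideriv (t : ℝ) : ℝ :=
  (3 * t * √(1 - t ^ 2) + arcsin t - 2 * t ^ 2 * arccos t) / (4 * π)

theorem hasDerivAt_gAntideriv {t : ℝ} (h₁ : -1 < t) (h₂ : t < 1) :
    HasDerivAt gAntideriv (g t) t := by
  have hpos : 0 < 1 - t ^ 2 := by nlinarith
  have hsqrt : HasDerivAt (fun t => √(1 - t ^ 2)) (-t / √(1 - t ^ 2)) t :=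
    (((hasDerivAt_pow 2 t).const_sub 1).sqrt hpos.ne').congr_deriv (by ring)
  refine (((((hasDerivAt_id' t).const_mul 3).mul hsqrt).add
    (hasDerivAt_arcsin h₁.ne' h₂.ne)).sub (((hasDerivAt_pow 2 t).const_mul 2).mul
    (hasDerivAt_arccos h₁.ne' h₂.ne))).div_const (4 * π) |>.congr_deriv ?_
  have hss : √(1 - t ^ 2) ^ 2 = 1 - t ^ 2 := sq_sqrt hpos.le
  simp only [g]
  field_simp
  linear_combination (-1 : ℝ) * hss

theorem integral_g_zero_one : ∫ t in (0 : ℝ)..1, g t = 1 / 8 := by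
  have hcont : Continuous gAntideriv := by unfold gAntideriv; fun_prop
  rw [intervalIntegral.integral_eq_sub_of_hasDerivAt_of_le zero_le_one hcont.continuousOn
    (fun t ht => hasDerivAt_gAntideriv (by linarith [ht.1]) ht.2)
    (continuous_g.intervalIntegrable _ _)]
  norm_num [gAntideriv]
  rw [div_div, div_eq_iff (by positivity)]
  ring

theorem integral_g_of_one_le {b : ℝ} (hb : 1 ≤ b) : ∫ t in (0 : ℝ)..b, g t = 1 / 8 := by
  have htail : ∫ t in (1 : ℝ)..b, g t = 0 := by
    rw [intervalIntegral.integral_congr (g := fun _ => (0 : ℝ)), intervalIntegral.integral_zero]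
    intro t ht
    rw [uIcc_of_le hb] at ht
    exact g_eq_zero_of_one_le ht.1
  rw [← intervalIntegral.integral_add_adjacent_intervals (b := 1)
    (continuous_g.intervalIntegrable _ _) (continuous_g.intervalIntegrable _ _),
    integral_g_zero_one, htail, add_zero]

theorem integral_mul_g_div {a b : ℝ} (ha : 0 < a) (hab : a ≤ b) :
    ∫ x in (0 : ℝ)..b, a * g (x / a) = a ^ 2 / 8 := by
  rw [intervalIntegral.integral_const_mul, intervalIntegral.integral_comp_div _ ha.ne', zero_div,
    integral_g_of_one_le ((one_le_div ha).2 hab), smul_eq_mul]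
  ring

section G

variable {r R : ℝ}

theorem G_eq_sub (hr : 0 < r) (x : ℝ) : G r R x = R * g (x / R) - r * g (x / r) := by
  unfold G
  split_ifs with hxr
  · rfl
  · rw [g_eq_zero_of_one_le ((one_le_div hr).2 (not_le.1 hxr).le), mul_zero, sub_zero]

theorem continuous_G (hr : 0 < r) : Continuous (G r R) := by
  rw [funext (G_eq_sub hr)]
  fun_prop

theorem G_nonneg (hr : 0 < r) (hrR : r ≤ R) {x : ℝ} (hx : 0 ≤ x) : 0 ≤ G r R x := by
  rw [G_eq_sub hr]
  exact sub_nonneg.2 (mul_g_div_le_mul_g_div hx hr hrR)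

theorem integral_G (hr : 0 < r) (hrR : r ≤ R) :
    ∫ x in (0 : ℝ)..R, G r R x = (R ^ 2 - r ^ 2) / 8 := by
  have hint : ∀ a : ℝ, IntervalIntegrable (fun x => a * g (x / a)) volume 0 R :=
    fun a => (by fun_prop : Continuous fun x => a * g (x / a)).intervalIntegrable _ _
  rw [funext (G_eq_sub hr), intervalIntegral.integral_sub (hint R) (hint r),
    integral_mul_g_div (hr.trans_le hrR) le_rfl, integral_mul_g_div hr hrR]
  ring

end G

theorem area_Omega (r R : ℝ) (hr : 0 < r) (hrR : r < R) :
    (MeasureTheory.volume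
        {p : ℝ × ℝ | 0 ≤ p.1 ∧ p.1 ≤ R ∧ 0 ≤ p.2 ∧ p.2 ≤ G r R p.1}).toReal
      = (R^2 - r^2) / 8 := by
  have hR : 0 < R := hr.trans hrR
  have hcont : Continuous (G r R) := continuous_G hr
  have hregion : {p : ℝ × ℝ | 0 ≤ p.1 ∧ p.1 ≤ R ∧ 0 ≤ p.2 ∧ p.2 ≤ G r R p.1} =
      {p : ℝ × ℝ | p.1 ∈ Icc 0 R ∧ p.2 ∈ Icc ((fun _ => (0 : ℝ)) p.1) (G r R p.1)} := by
    ext p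
    simp [and_assoc]
  rw [hregion, Measure.volume_eq_prod, prod_volume_region_between_cc_eq_integral
    measurable_const hcont.measurable measurableSet_Icc continuous_const.integrableOn_Icc
    hcont.integrableOn_Icc fun x hx => G_nonneg hr hrR.le hx.1]
  simp only [sub_zero]
  rw [integral_Icc_eq_integral_Ioc, ← intervalIntegral.integral_of_le hR.le,
    integral_G hr hrR.le, ENNReal.toReal_ofReal]
  nlinarith
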